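/- arXiv:1512.04318 — 2 statements merged into one kernel-verified Lean document; each statement's English description precedes it below -/
import Mathlib

section
/- Let V be a finite-dimensional real inner product space with orthogonal complex structure J and S a symmetric endomorphism with SJ = -JS. If A is an endomorphism whose symmetric part equals J∘B for a symmetric endomorphism B anticommuting with J, and whose skew-symmetric part equals -2JS², then tr(A²) = tr(B²) - 4·tr(S⁴). -/
/-!
Expanding `(JB - 2JS²)²` and moving `J` across `B` and `S²` with `J² = -1`, `BJ = -JB`,
`S²J = JS²` turns it into `B² - 2BS² + 2S²B - 4S⁴`, and the mixed terms cancel in the trace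
because `tr(BS²) = tr(S²B)`.
-/

section Anticommute

variable {A : Type*} [Ring A] {J X Y : A}

theorem commute_mul_self_of_mul_eq_neg (hX : X * J = -(J * X)) : Commute J (X * X) := by
  have h : X * X * J = J * (X * X) := by
    rw [mul_assoc, hX, mul_neg, ← mul_assoc, hX, neg_mul, neg_neg, mul_assoc]
  exact h.symm

theorem mul_mul_mul_of_anticommute (hJ : J * J = -1) (hX : X * J = -(J * X)) (Y : A) :
    J * X * (J * Y) = X * Y := by
  rw [mul_assoc, ← mul_assoc X, hX, neg_mul, mul_neg, ← mul_assoc, ← mul_assoc, hJ,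
    neg_one_mul, neg_mul, neg_neg]

theorem mul_mul_mul_of_commute (hJ : J * J = -1) (hX : Commute J X) (Y : A) :
    J * X * (J * Y) = -(X * Y) := by
  rw [mul_assoc, ← mul_assoc X, ← hX.eq, ← mul_assoc, ← mul_assoc, hJ, neg_one_mul, neg_mul]

variable {R : Type*} [CommRing R] [Algebra R A] {B Q : A}

theorem mul_self_sub_smul_of_anticommute (hJ : J * J = -1) (hB : B * J = -(J * B))
    (hQ : Commute J Q) (c : R) :
    (J * B - c • (J * Q)) * (J * B - c • (J * Q))
      = B * B - c • (B * Q) + c • (Q * B) - c ^ 2 • (Q * Q) := by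
  simp only [sub_mul, mul_sub, smul_mul_assoc, mul_smul_comm,
    mul_mul_mul_of_anticommute hJ hB, mul_mul_mul_of_commute hJ hQ]
  module

end Anticommute

theorem LinearMap.trace_mul_self_sub_smul_of_anticommute {R M : Type*} [CommRing R]
    [AddCommGroup M] [Module R M] {J B Q : Module.End R M} (hJ : J * J = -1)
    (hB : B * J = -(J * B)) (hQ : Commute J Q) (c : R) :
    trace R M ((J * B - c • (J * Q)) * (J * B - c • (J * Q)))
      = trace R M (B * B) - c ^ 2 * trace R M (Q * Q) := by
  rw [mul_self_sub_smul_of_anticommute hJ hB hQ c, map_sub, map_add, map_sub, map_smul,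
    map_smul, map_smul, trace_mul_comm R B Q]
  ring

theorem stmt4_general {V : Type*} [NormedAddCommGroup V] [InnerProductSpace ℝ V]
    (J S B A : V →ₗ[ℝ] V)
    (hJ2 : ∀ x, J (J x) = -x)
    (hanti : S ∘ₗ J = -(J ∘ₗ S))
    (hBanti : B ∘ₗ J = -(J ∘ₗ B))
    (hA : A = J ∘ₗ B - (2 : ℝ) • (J ∘ₗ S ∘ₗ S)) :
    LinearMap.trace ℝ V (A ∘ₗ A)
      = LinearMap.trace ℝ V (B ∘ₗ B) - 4 * LinearMap.trace ℝ V (S ∘ₗ S ∘ₗ S ∘ₗ S) := by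
  have hJ : J * J = -1 := LinearMap.ext hJ2
  have hS2 : Commute J (S * S) := commute_mul_self_of_mul_eq_neg hanti
  subst hA
  have h := LinearMap.trace_mul_self_sub_smul_of_anticommute hJ hBanti hS2 (2 : ℝ)
  norm_num at h
  exact h

/-- If `S` is symmetric and anticommutes with `J`, `B` is symmetric and
anticommutes with `J`, and `A = JB - 2JS²` (so that the symmetric part of `A` is `JB` and
its skew-symmetric part is `-2JS²`), then `tr(A²) = tr(B²) - 4 tr(S⁴)`. -/
theorem stmt4 {V : Type*} [NormedAddCommGroup V] [InnerProductSpace ℝ V]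
    [FiniteDimensional ℝ V]
    (J S B A : V →ₗ[ℝ] V)
    (hJ2 : ∀ x, J (J x) = -x)
    (hJorth : ∀ x y, (inner ℝ (J x) (J y) : ℝ) = inner ℝ x y)
    (hS : ∀ x y, (inner ℝ (S x) y : ℝ) = inner ℝ x (S y))
    (hanti : S ∘ₗ J = -(J ∘ₗ S))
    (hB : ∀ x y, (inner ℝ (B x) y : ℝ) = inner ℝ x (B y))
    (hBanti : B ∘ₗ J = -(J ∘ₗ B))
    (hA : A = J ∘ₗ B - (2 : ℝ) • (J ∘ₗ S ∘ₗ S)) :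
    LinearMap.trace ℝ V (A ∘ₗ A)
      = LinearMap.trace ℝ V (B ∘ₗ B) - 4 * LinearMap.trace ℝ V (S ∘ₗ S ∘ₗ S ∘ₗ S) :=
  stmt4_general J S B A hJ2 hanti hBanti hA
end

section
/- Let A be an associative ring (endomorphisms under composition), and let S, with derivations D₁ = L_ξ and D₂ = L_{Jξ} acting on it, satisfy: D₁S = 2S² - J·(D₂S) and D₂S = J·(D₁S) - 2JS², where J is a fixed element with J² = -1, JS = -SJ, D₁J = 2JS, D₂J = -2S, and D₁D₂ = D₂D₁. Then J·(D₁²S + D₂²S) = 4S·(D₂S) + 4(D₂S)·S + 8JS³. -/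
/-- Abstract form of the Lie-derivative computation in the proof of the
main theorem. In an associative ring `A` with commuting derivations `D₁ = L_ξ`,
`D₂ = L_{Jξ}` and elements `J, S` satisfying `J² = -1`, `SJ = -JS`, `D₁J = 2JS`,
`D₂J = -2S`, `D₁S = 2S² - J(D₂S)` and `D₂S = J(D₁S) - 2JS²`, one has
`J(D₁²S + D₂²S) = 4S(D₂S) + 4(D₂S)S + 8JS³`. -/
theorem stmt12 {A : Type*} [Ring A]
    (D₁ D₂ : A → A)
    (hD₁add : ∀ a b, D₁ (a + b) = D₁ a + D₁ b)
    (hD₂add : ∀ a b, D₂ (a + b) = D₂ a + D₂ b)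
    (hD₁mul : ∀ a b, D₁ (a * b) = D₁ a * b + a * D₁ b)
    (hD₂mul : ∀ a b, D₂ (a * b) = D₂ a * b + a * D₂ b)
    (hcomm : ∀ a, D₁ (D₂ a) = D₂ (D₁ a))
    (J S : A)
    (hJ2 : J * J = -1)
    (hanti : S * J = -(J * S))
    (hD₁J : D₁ J = 2 * (J * S))
    (hD₂J : D₂ J = -(2 * S))
    (hD₁S : D₁ S = 2 * S ^ 2 - J * D₂ S)
    (hD₂S : D₂ S = J * D₁ S - 2 * (J * S ^ 2)) :
    J * (D₁ (D₁ S) + D₂ (D₂ S))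
      = 4 * (S * D₂ S) + 4 * (D₂ S * S) + 8 * (J * S ^ 3) := by
  have h1one : D₁ (1 : A) = 0 := by have := hD₁mul 1 1; simp at this; exact this
  have h2one : D₂ (1 : A) = 0 := by have := hD₂mul 1 1; simp at this; exact this
  have h1two : D₁ (2 : A) = 0 := by
    have := hD₁add (1:A) 1; rw [h1one] at this; norm_num at this; exact this
  have h2two : D₂ (2 : A) = 0 := by
    have := hD₂add (1:A) 1; rw [h2one] at this; norm_num at this; exact this
  have h10 : D₁ (0 : A) = 0 := by have := hD₁add 0 0; simpa using this
  have h20 : D₂ (0 : A) = 0 := by have := hD₂add 0 0; simpa using this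
  have h1neg : ∀ a : A, D₁ (-a) = -D₁ a := fun a => by
    have := hD₁add a (-a); simp [h10] at this
    exact eq_neg_of_add_eq_zero_right this.symm
  have h2neg : ∀ a : A, D₂ (-a) = -D₂ a := fun a => by
    have := hD₂add a (-a); simp [h20] at this
    exact eq_neg_of_add_eq_zero_right this.symm
  have h1sub : ∀ a b : A, D₁ (a - b) = D₁ a - D₁ b := fun a b => by
    rw [sub_eq_add_neg, hD₁add, h1neg, ← sub_eq_add_neg]
  have h2sub : ∀ a b : A, D₂ (a - b) = D₂ a - D₂ b := fun a b => by
    rw [sub_eq_add_neg, hD₂add, h2neg, ← sub_eq_add_neg]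
  -- expansion of D₁ (D₁ S)
  have eD1 : D₁ (D₁ S)
      = 2 * (D₁ S * S) + 2 * (S * D₁ S)
        - (2 * (J * S) * D₂ S + J * D₁ (D₂ S)) := by
    conv_lhs => rw [hD₁S, h1sub, pow_two, hD₁mul, hD₁mul S S, hD₁mul J, h1two, hD₁J]
    noncomm_ring
  -- expansion of D₂ (D₂ S)
  have eD2 : D₂ (D₂ S)
      = -(2 * S) * D₁ S + J * D₂ (D₁ S)
        - (-(2 * S) * (S * S) + J * (D₂ S * S + S * D₂ S)) * 2 := by
    conv_lhs => rw [hD₂S, h2sub, hD₂mul J, pow_two, hD₂mul (2:A), hD₂mul J,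
      hD₂mul S S, hD₂J, h2two]
    noncomm_ring
  have E : D₁ (D₁ S) + D₂ (D₂ S)
      = 8 * S ^ 3 - 4 * (J * (D₂ S * S)) - 4 * (J * (S * D₂ S)) := by
    rw [eD1, eD2, hcomm S, hD₁S]
    noncomm_ring
  calc J * (D₁ (D₁ S) + D₂ (D₂ S))
      = 8 * (J * S ^ 3) - 4 * ((J * J) * (D₂ S * S)) - 4 * ((J * J) * (S * D₂ S)) := by
        rw [E]; noncomm_ring
    _ = 4 * (S * D₂ S) + 4 * (D₂ S * S) + 8 * (J * S ^ 3) := by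
        rw [hJ2]; noncomm_ring
end
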